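/- arXiv:1903.02669 — 4 statements merged into one kernel-verified Lean document; each statement's English description precedes it below -/
import Mathlib

section
/- The Hasse square of the integers is a pullback square of commutative rings: the square with vertices ℤ, ℚ, ∏_p ℤ_p and ℚ ⊗_ℤ ∏_p ℤ_p (where the maps are the canonical ring homomorphisms, with ℚ → ℚ ⊗_ℤ ∏_p ℤ_p given by q ↦ q ⊗ 1 and ∏_p ℤ_p → ℚ ⊗_ℤ ∏_p ℤ_p given by x ↦ 1 ⊗ x) commutes, and whenever q ∈ ℚ and x ∈ ∏_p ℤ_p satisfy q ⊗ 1 = 1 ⊗ x in ℚ ⊗_ℤ ∏_p ℤ_p, there exists a unique integer n with (n : ℚ) = q and (n : ∏_p ℤ_p) = x. -/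
open scoped TensorProduct

instance (p : Nat.Primes) : Fact (p : ℕ).Prime := ⟨p.2⟩

/-- The product over all prime numbers `p` of the rings of `p`-adic integers. -/
abbrev Zhat : Type := Π p : Nat.Primes, ℤ_[(p : ℕ)]

/-! Both legs of the square land in `ℚ_p` for every prime `p`, so `q ⊗ 1 = 1 ⊗ x` forces `q` to
be a `p`-adic integer for all `p`; its denominator then has no prime factor, so `q` is an integer
`n`, and `n = x` in `∏_p ℤ_p` because `ℤ_p ⊆ ℚ_p`. -/

theorem Algebra.TensorProduct.apply_eq_apply_of_tmul_one_eq_one_tmul {R A B C : Type*}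
    [CommSemiring R] [Semiring A] [Semiring B] [CommSemiring C]
    [Algebra R A] [Algebra R B] [Algebra R C] (f : A →ₐ[R] C) (g : B →ₐ[R] C)
    {a : A} {b : B} (h : a ⊗ₜ[R] (1 : B) = (1 : A) ⊗ₜ b) : f a = g b := by
  simpa using congrArg (productMap f g) h

theorem Rat.den_eq_one_of_forall_norm_padic_le_one {q : ℚ}
    (h : ∀ p : Nat.Primes, ‖(q : ℚ_[(p : ℕ)])‖ ≤ 1) : q.den = 1 :=
  Nat.eq_one_iff_not_exists_prime_dvd.2 fun p hp hdvd => by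
    have : Fact p.Prime := ⟨hp⟩
    exact Rat.padicValuation_le_one_iff.1
      ((Padic.norm_rat_le_one_iff_padicValuation_le_one p).1 (h ⟨p, hp⟩)) hdvd

/-- The Hasse square of the integers is a pullback square of commutative rings:
the square with vertices `ℤ`, `ℚ`, `∏_p ℤ_p` and `ℚ ⊗[ℤ] ∏_p ℤ_p` commutes, and
whenever `q ⊗ 1 = 1 ⊗ x` there is a unique integer `n` mapping to `q` and `x`. -/
theorem hasse_square_is_pullback :
    (∀ n : ℤ, ((n : ℚ) ⊗ₜ[ℤ] (1 : Zhat) : ℚ ⊗[ℤ] Zhat) = (1 : ℚ) ⊗ₜ[ℤ] ((n : Zhat))) ∧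
    ∀ (q : ℚ) (x : Zhat), (q ⊗ₜ[ℤ] (1 : Zhat) : ℚ ⊗[ℤ] Zhat) = (1 : ℚ) ⊗ₜ[ℤ] x →
      ∃! n : ℤ, (n : ℚ) = q ∧ (n : Zhat) = x := by
  refine ⟨fun n => by simpa using Algebra.TensorProduct.tmul_one_eq_one_tmul (A := ℚ) (B := Zhat) n,
    fun q x h => ?_⟩
  have hcoe : ∀ p : Nat.Primes, (q : ℚ_[(p : ℕ)]) = x p := fun p =>
    Algebra.TensorProduct.apply_eq_apply_of_tmul_one_eq_one_tmul (Rat.castHom _).toIntAlgHom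
      (PadicInt.Coe.ringHom.comp (Pi.evalRingHom _ p)).toIntAlgHom h
  have hden : q.den = 1 :=
    Rat.den_eq_one_of_forall_norm_padic_le_one fun p => hcoe p ▸ (x p).norm_le_one
  obtain ⟨n, rfl⟩ : ∃ n : ℤ, (n : ℚ) = q := ⟨q.num, Rat.coe_int_num_of_den_eq_one hden⟩
  refine ⟨n, ⟨rfl, funext fun p => PadicInt.ext ?_⟩, fun m hm => Int.cast_injective hm.1⟩
  simpa using hcoe p
end

section
/- Every element of ℚ ⊗_ℤ ∏_p ℤ_p can be written in the form q ⊗ 1 + 1 ⊗ x for some q ∈ ℚ and x ∈ ∏_p ℤ_p; equivalently, the additive map ℚ × ∏_p ℤ_p → ℚ ⊗_ℤ ∏_p ℤ_p sending (q, x) to q ⊗ 1 + 1 ⊗ x is surjective. -/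
/-!
For `q = a / n` and `x ∈ Ẑ`, approximate `x` modulo `n` by an integer: `x = c + n z` with `c ∈ ℤ`.
Then `q ⊗ x = q c ⊗ 1 + a ⊗ z = q c ⊗ 1 + 1 ⊗ a z`, so pure tensors, and hence all elements,
have the required form. The approximation exists because `ℤ → Ẑ / n Ẑ` is onto: for a prime `p`
take `c ≡ x_p mod p`, noting that `p` is a unit in `ℤ_q` for `q ≠ p`, and then pass to
products of primes.
-/

open scoped TensorProduct

def IntCastSurjectiveMod (A : Type*) [Ring A] (n : ℕ) : Prop :=
  ∀ y : A, ∃ (c : ℤ) (z : A), y = c + n * z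

theorem IntCastSurjectiveMod.mul {A : Type*} [Ring A] {a b : ℕ}
    (ha : IntCastSurjectiveMod A a) (hb : IntCastSurjectiveMod A b) :
    IntCastSurjectiveMod A (a * b) := by
  intro y
  obtain ⟨c, z, rfl⟩ := ha y
  obtain ⟨c', z', rfl⟩ := hb z
  exact ⟨c + a * c', z', by push_cast; noncomm_ring⟩

theorem IntCastSurjectiveMod.of_prime {A : Type*} [Ring A]
    (h : ∀ p : ℕ, p.Prime → IntCastSurjectiveMod A p) {n : ℕ} (hn : n ≠ 0) :
    IntCastSurjectiveMod A n := by
  induction n using Nat.recOnMul with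
  | zero => exact absurd rfl hn
  | one => exact fun y => ⟨0, y, by simp⟩
  | prime p hp => exact h p hp
  | mul a b iha ihb => exact (iha (left_ne_zero_of_mul hn)).mul (ihb (right_ne_zero_of_mul hn))

theorem PadicInt.isUnit_natCast_of_ne {p q : ℕ} [Fact p.Prime] [Fact q.Prime] (hpq : p ≠ q) :
    IsUnit (q : ℤ_[p]) := by
  rw [isUnit_iff, norm_natCast_eq_one_iff]
  exact (Nat.coprime_primes Fact.out Fact.out).mpr hpq

theorem Zhat.intCastSurjectiveMod_prime (p : Nat.Primes) : IntCastSurjectiveMod Zhat p := by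
  intro y
  let c : ℤ := (y p).appr 1
  have hcomp : ∀ q : Nat.Primes, ∃ w : ℤ_[(q : ℕ)], y q = c + (p : ℕ) * w := by
    intro q
    by_cases hqp : q = p
    · subst hqp
      obtain ⟨w, hw⟩ := Ideal.mem_span_singleton'.mp (PadicInt.appr_spec 1 (y q))
      exact ⟨w, by rw [pow_one] at hw; push_cast [c] at hw ⊢; linear_combination -hw⟩
    · obtain ⟨u, hu⟩ := PadicInt.isUnit_natCast_of_ne (p := q) (q := p) (fun h => hqp (Subtype.ext h))
      refine ⟨↑u⁻¹ * (y q - c), ?_⟩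
      rw [← hu, ← mul_assoc, Units.mul_inv, one_mul, add_sub_cancel]
  choose w hw using hcomp
  exact ⟨c, w, funext fun q => by simpa using hw q⟩

theorem Zhat.intCastSurjectiveMod {n : ℕ} (hn : n ≠ 0) : IntCastSurjectiveMod Zhat n :=
  IntCastSurjectiveMod.of_prime (fun p hp => intCastSurjectiveMod_prime ⟨p, hp⟩) hn

theorem TensorProduct.rat_tmul_eq_tmul_one_add_one_tmul {A : Type*} [Ring A]
    (hA : ∀ n : ℕ, n ≠ 0 → IntCastSurjectiveMod A n) (q : ℚ) (x : A) :
    ∃ (r : ℚ) (y : A), q ⊗ₜ[ℤ] x = r ⊗ₜ[ℤ] (1 : A) + (1 : ℚ) ⊗ₜ[ℤ] y := by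
  obtain ⟨c, z, rfl⟩ := hA q.den q.den_ne_zero x
  refine ⟨q * c, q.num • z, ?_⟩
  have hint : q ⊗ₜ[ℤ] (c : A) = (q * c) ⊗ₜ[ℤ] (1 : A) := by
    rw [← zsmul_one c, ← smul_tmul, zsmul_eq_mul, mul_comm]
  have hden : q ⊗ₜ[ℤ] ((q.den : A) * z) = (1 : ℚ) ⊗ₜ[ℤ] (q.num • z) := by
    rw [← nsmul_eq_mul, ← smul_tmul, ← smul_tmul, nsmul_eq_mul, zsmul_eq_mul, mul_one,
      Rat.den_mul_eq_num]
  rw [tmul_add, hint, hden]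

/-- Every element of `ℚ ⊗[ℤ] ∏_p ℤ_p` is of the form `q ⊗ 1 + 1 ⊗ x`:
the map `ℚ × ∏_p ℤ_p → ℚ ⊗[ℤ] ∏_p ℤ_p`, `(q, x) ↦ q ⊗ 1 + 1 ⊗ x`, is surjective. -/
theorem hasse_sum_surjective :
    Function.Surjective (fun qx : ℚ × Zhat =>
      (qx.1 ⊗ₜ[ℤ] (1 : Zhat) + (1 : ℚ) ⊗ₜ[ℤ] qx.2 : ℚ ⊗[ℤ] Zhat)) := by
  intro t
  induction t with
  | zero => exact ⟨0, by simp⟩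
  | tmul q x =>
    obtain ⟨r, y, h⟩ :=
      TensorProduct.rat_tmul_eq_tmul_one_add_one_tmul (fun _ => Zhat.intCastSurjectiveMod) q x
    exact ⟨(r, y), h.symm⟩
  | add a b iha ihb =>
    obtain ⟨⟨q₁, x₁⟩, rfl⟩ := iha
    obtain ⟨⟨q₂, x₂⟩, rfl⟩ := ihb
    refine ⟨(q₁ + q₂, x₁ + x₂), ?_⟩
    simp only [TensorProduct.add_tmul, TensorProduct.tmul_add]
    abel
end

section
/- The Hasse square of the integers is a homotopy pullback, i.e. the associated total sequence of abelian groups is short exact: the sequence 0 → ℤ → ℚ × ∏_p ℤ_p → ℚ ⊗_ℤ ∏_p ℤ_p → 0 is exact, where the first map is the diagonal n ↦ ((n : ℚ), (n : ∏_p ℤ_p)) and the second map sends (q, x) to q ⊗ 1 − 1 ⊗ x. That is: the diagonal map is injective, the second map is surjective, and the kernel of the second map equals the image of the diagonal. -/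
/-!
For surjectivity, `q ⊗ z` with `q = a / d` equals `(1 / d) ⊗ a z`, and `a z = c + d y` for some
integer `c` because `ℤ` is dense in `∏_p ℤ_p` (Chinese remainder theorem plus `p`-adic
approximation); then `q ⊗ z = (c / d) ⊗ 1 + 1 ⊗ y`. For the kernel, `q ⊗ 1 = 1 ⊗ x` maps under
`ℚ ⊗ ℤ_p → ℚ_p` to `q = x_p`, so `q` is a `p`-adic integer for every `p`, hence an integer `n`,
and then `x = n` componentwise.
-/

open scoped TensorProduct

open TensorProduct

theorem exists_intCast_dvd_sub_of_coprime {R : Type*} [CommRing R] {a b : ℕ} (hab : a.Coprime b)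
    {x : R} (ha : ∃ c : ℤ, (a : R) ∣ x - c) (hb : ∃ c : ℤ, (b : R) ∣ x - c) :
    ∃ c : ℤ, ((a * b : ℕ) : R) ∣ x - c := by
  obtain ⟨ca, ya, hya⟩ := ha
  obtain ⟨cb, yb, hyb⟩ := hb
  obtain ⟨u, v, huv⟩ := Nat.isCoprime_iff_coprime.mpr hab
  have huv' : (u : R) * a + v * b = 1 := by exact_mod_cast congrArg (Int.cast : ℤ → R) huv
  refine ⟨cb * u * a + ca * v * b, u * yb + v * ya, ?_⟩
  push_cast
  linear_combination (-x) * huv' + u * a * hyb + v * b * hya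

theorem exists_intCast_dvd_sub_of_primePow {R : Type*} [CommRing R]
    (h : ∀ p k : ℕ, p.Prime → ∀ x : R, ∃ c : ℤ, ((p ^ k : ℕ) : R) ∣ x - c)
    {n : ℕ} (hn : 0 < n) (x : R) : ∃ c : ℤ, (n : R) ∣ x - c := by
  induction n using Nat.recOnPosPrimePosCoprime generalizing x with
  | prime_pow p k hp _ => exact h p k hp x
  | zero => exact absurd hn (lt_irrefl 0)
  | one => exact ⟨0, by simp⟩
  | coprime a b _ _ hab iha ihb =>
    exact exists_intCast_dvd_sub_of_coprime hab (iha (by omega) x) (ihb (by omega) x)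

theorem PadicInt.isUnit_natCast_of_prime_ne {p q : ℕ} [Fact p.Prime] (hq : q.Prime) (hqp : q ≠ p) :
    IsUnit (q : ℤ_[p]) :=
  isUnit_iff.mpr (norm_natCast_eq_one_iff.mpr ((Nat.coprime_primes Fact.out hq).mpr hqp.symm))

theorem Zhat.exists_intCast_dvd_sub_primePow (p : Nat.Primes) (k : ℕ) (x : Zhat) :
    ∃ c : ℤ, ((p ^ k : ℕ) : Zhat) ∣ x - c := by
  refine ⟨(x p).appr k, ?_⟩
  have (q : Nat.Primes) : ((p ^ k : ℕ) : ℤ_[q]) ∣ x q - ((x p).appr k : ℤ) := by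
    rcases eq_or_ne q p with rfl | hqp
    · simpa [Ideal.mem_span_singleton] using (x q).appr_spec k
    · rw [Nat.cast_pow]
      exact ((PadicInt.isUnit_natCast_of_prime_ne p.2
        (Subtype.coe_injective.ne hqp.symm)).pow k).dvd
  choose y hy using this
  exact ⟨y, funext hy⟩

theorem Zhat.exists_intCast_dvd_sub {n : ℕ} (hn : 0 < n) (x : Zhat) :
    ∃ c : ℤ, (n : Zhat) ∣ x - c :=
  exists_intCast_dvd_sub_of_primePow
    (fun p k hp => Zhat.exists_intCast_dvd_sub_primePow ⟨p, hp⟩ k) hn x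

theorem surjective_tmul_one_sub_one_tmul {R : Type*} [CommRing R]
    (hR : ∀ n : ℕ, 0 < n → ∀ x : R, ∃ c : ℤ, (n : R) ∣ x - c) :
    Function.Surjective fun qx : ℚ × R => qx.1 ⊗ₜ[ℤ] (1 : R) - (1 : ℚ) ⊗ₜ[ℤ] qx.2 := by
  intro t
  induction t using TensorProduct.induction_on with
  | zero => exact ⟨0, by simp⟩
  | tmul q z =>
    obtain ⟨c, y, hy⟩ := hR q.den q.den_pos (q.num • z)
    have hden : (q.den : ℚ) ≠ 0 := by positivity
    refine ⟨(c / q.den, -y), ?_⟩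
    calc (c / q.den : ℚ) ⊗ₜ[ℤ] (1 : R) - (1 : ℚ) ⊗ₜ[ℤ] (-y)
        = (c • (q.den : ℚ)⁻¹) ⊗ₜ (1 : R) + ((q.den : ℤ) • (q.den : ℚ)⁻¹) ⊗ₜ y := by
          simp [div_eq_mul_inv, hden, tmul_neg, sub_neg_eq_add]
      _ = (q.den : ℚ)⁻¹ ⊗ₜ (q.num • z) := by
          rw [smul_tmul, smul_tmul, ← tmul_add]
          congr 1
          simp only [zsmul_eq_mul, mul_one, Int.cast_natCast] at hy ⊢
          linear_combination -hy
      _ = q ⊗ₜ z := by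
          rw [← smul_tmul, zsmul_eq_mul, ← div_eq_mul_inv, Rat.num_div_den]
  | add t₁ t₂ h₁ h₂ =>
    obtain ⟨⟨q₁, x₁⟩, rfl⟩ := h₁
    obtain ⟨⟨q₂, x₂⟩, rfl⟩ := h₂
    refine ⟨(q₁ + q₂, x₁ + x₂), ?_⟩
    simp only [add_tmul, tmul_add]
    abel

theorem RingHom.map_eq_of_tmul_one_eq_one_tmul {A B S : Type*} [Ring A] [Ring B] [CommRing S]
    (f : A →+* S) (g : B →+* S) {a : A} {b : B} (h : a ⊗ₜ[ℤ] (1 : B) = (1 : A) ⊗ₜ[ℤ] b) :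
    f a = g b := by
  simpa using congrArg (Algebra.TensorProduct.productMap f.toIntAlgHom g.toIntAlgHom) h

theorem Rat.exists_intCast_eq_of_forall_norm_le_one {q : ℚ}
    (h : ∀ (p : ℕ) [Fact p.Prime], ‖(q : ℚ_[p])‖ ≤ 1) : ∃ n : ℤ, (n : ℚ) = q := by
  refine ⟨q.num, Rat.coe_int_num_of_den_eq_one ?_⟩
  refine Nat.eq_one_iff_not_exists_prime_dvd.mpr fun p hp => ?_
  have : Fact p.Prime := ⟨hp⟩
  exact Rat.padicValuation_le_one_iff.mp
    ((Padic.norm_rat_le_one_iff_padicValuation_le_one p).mp (h p))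

theorem Zhat.exists_intCast_of_tmul_one_eq_one_tmul {q : ℚ} {x : Zhat}
    (h : q ⊗ₜ[ℤ] (1 : Zhat) = (1 : ℚ) ⊗ₜ[ℤ] x) : ∃ n : ℤ, (n : ℚ) = q ∧ (n : Zhat) = x := by
  have hqx (p : Nat.Primes) : (q : ℚ_[p]) = x p :=
    (Rat.castHom _).map_eq_of_tmul_one_eq_one_tmul
      (PadicInt.Coe.ringHom.comp (Pi.evalRingHom _ p)) h
  have hnorm (p : ℕ) [Fact p.Prime] : ‖(q : ℚ_[p])‖ ≤ 1 := by
    have hp := hqx ⟨p, Fact.out⟩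
    rw [hp]
    exact (x ⟨p, Fact.out⟩).norm_le_one
  obtain ⟨n, rfl⟩ := Rat.exists_intCast_eq_of_forall_norm_le_one hnorm
  refine ⟨n, rfl, funext fun p => Subtype.ext ?_⟩
  rw [Pi.intCast_apply, PadicInt.coe_intCast, ← hqx p, Rat.cast_intCast]

theorem Zhat.tmul_one_eq_one_tmul_iff {q : ℚ} {x : Zhat} :
    q ⊗ₜ[ℤ] (1 : Zhat) = (1 : ℚ) ⊗ₜ[ℤ] x ↔ ∃ n : ℤ, (n : ℚ) = q ∧ (n : Zhat) = x := by
  refine ⟨Zhat.exists_intCast_of_tmul_one_eq_one_tmul, ?_⟩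
  rintro ⟨n, rfl, rfl⟩
  exact (Algebra.TensorProduct.intCast_def n).symm.trans (Algebra.TensorProduct.intCast_def' n)

/-- The Hasse square of the integers is a homotopy pullback:
the sequence `0 → ℤ → ℚ × ∏_p ℤ_p → ℚ ⊗[ℤ] ∏_p ℤ_p → 0` is exact, where the first map
is the diagonal `n ↦ ((n : ℚ), (n : ∏_p ℤ_p))` and the second sends `(q, x)` to
`q ⊗ 1 - 1 ⊗ x`. -/
theorem hasse_square_short_exact :
    Function.Injective (fun n : ℤ => (((n : ℚ), (n : Zhat)) : ℚ × Zhat)) ∧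
    Function.Surjective (fun qx : ℚ × Zhat =>
      (qx.1 ⊗ₜ[ℤ] (1 : Zhat) - (1 : ℚ) ⊗ₜ[ℤ] qx.2 : ℚ ⊗[ℤ] Zhat)) ∧
    ∀ qx : ℚ × Zhat,
      (qx.1 ⊗ₜ[ℤ] (1 : Zhat) - (1 : ℚ) ⊗ₜ[ℤ] qx.2 : ℚ ⊗[ℤ] Zhat) = 0 ↔
        ∃ n : ℤ, (((n : ℚ), (n : Zhat)) : ℚ × Zhat) = qx := by
  refine ⟨fun _ _ h => Int.cast_injective (α := ℚ) (congrArg Prod.fst h),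
    surjective_tmul_one_sub_one_tmul fun _ hn => Zhat.exists_intCast_dvd_sub hn, ?_⟩
  rintro ⟨q, x⟩
  simp only [sub_eq_zero, Zhat.tmul_one_eq_one_tmul_iff, Prod.ext_iff]
end

section
/- Every unit α of the commutative ring ℚ ⊗_ℤ ∏_p ℤ_p can be written as α = (q ⊗ 1) · (1 ⊗ u) for some q ∈ ℚˣ and some unit u of the ring ∏_p ℤ_p. (This expresses that the ideal class group of ℤ is trivial: the map ℚˣ × (∏_p ℤ_p)ˣ → (ℚ ⊗_ℤ ∏_p ℤ_p)ˣ is surjective.) -/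
open scoped TensorProduct

/-!
Clearing denominators, `s • α = 1 ⊗ x` for a nonzero integer `s` and some `x ∈ ∏_p ℤ_p`.
Since `∏_p ℤ_p` is torsion free, `1 ⊗ x` being invertible forces `x` to divide a nonzero natural
number `n`. Hence every `x_p` is nonzero with `v_p(x_p) ≤ v_p(n)`, so only finitely many
valuations are positive and `d = ∏_p p ^ v_p(x_p)` is a natural number associated to `x`
componentwise: `x = d * u` with `u` a unit, and `α = (d / s ⊗ 1) * (1 ⊗ u)`.
-/

namespace TensorProduct

variable {M : Type*} [AddCommGroup M]

theorem exists_zsmul_eq_one_tmul (t : ℚ ⊗[ℤ] M) : ∃ s : ℤ, s ≠ 0 ∧ ∃ x : M, s • t = 1 ⊗ₜ x := by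
  obtain ⟨⟨x, s⟩, h⟩ := IsLocalizedModule.surj (nonZeroDivisors ℤ) (mk ℤ ℚ M 1) t
  exact ⟨s, nonZeroDivisors.ne_zero s.2, x, h⟩

theorem one_tmul_injective [IsAddTorsionFree M] :
    Function.Injective fun x : M ↦ (1 : ℚ) ⊗ₜ[ℤ] x := by
  intro x y h
  obtain ⟨c, hc⟩ := (IsLocalizedModule.eq_iff_exists (nonZeroDivisors ℤ) (mk ℤ ℚ M 1)).mp h
  exact smul_right_injective M (nonZeroDivisors.ne_zero c.2) hc

theorem exists_dvd_natCast_of_isUnit_one_tmul {R : Type*} [CommRing R] [IsAddTorsionFree R]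
    {x : R} (hx : IsUnit ((1 : ℚ) ⊗ₜ[ℤ] x)) : ∃ n : ℕ, n ≠ 0 ∧ x ∣ (n : R) := by
  obtain ⟨β, hβ⟩ := hx.exists_right_inv
  obtain ⟨s, hs, y, hy⟩ := exists_zsmul_eq_one_tmul β
  have hxy : x * y = s := one_tmul_injective <| calc
    (1 : ℚ) ⊗ₜ[ℤ] (x * y) = (1 ⊗ₜ x) * (1 ⊗ₜ y) := by
      rw [Algebra.TensorProduct.tmul_mul_tmul, one_mul]
    _ = s • ((1 ⊗ₜ x) * β) := by rw [← hy, mul_smul_comm]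
    _ = 1 ⊗ₜ (s : R) := by
      rw [hβ, Algebra.TensorProduct.one_def, ← tmul_smul, zsmul_eq_mul, mul_one]
  refine ⟨s.natAbs, Int.natAbs_ne_zero.mpr hs, (Dvd.intro y hxy).trans ?_⟩
  simpa using ((Int.associated_natAbs s).map (Int.castRingHom R)).dvd

end TensorProduct

theorem Pi.associated_of_forall {ι : Type*} {R : ι → Type*} [∀ i, Monoid (R i)] {x y : ∀ i, R i}
    (h : ∀ i, Associated (x i) (y i)) : Associated x y := by
  choose u hu using h
  exact ⟨MulEquiv.piUnits.symm u, funext hu⟩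

namespace PadicInt

variable {p : ℕ} [Fact p.Prime]

theorem valuation_natCast (n : ℕ) : (n : ℤ_[p]).valuation = padicValNat p n := by
  rw [← Nat.cast_inj (R := ℤ), ← valuation_coe, coe_natCast, Padic.valuation_natCast]

theorem valuation_le_of_dvd {x y : ℤ_[p]} (hy : y ≠ 0) (h : x ∣ y) :
    x.valuation ≤ y.valuation := by
  obtain ⟨c, rfl⟩ := h
  rw [valuation_mul (left_ne_zero_of_mul hy) (right_ne_zero_of_mul hy)]
  exact Nat.le_add_right _ _

theorem associated_pow_valuation {x : ℤ_[p]} (hx : x ≠ 0) :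
    Associated x ((p : ℤ_[p]) ^ x.valuation) := by
  conv_lhs => rw [unitCoeff_spec hx]
  exact associated_unit_mul_left _ _ (unitCoeff hx).isUnit

theorem associated_of_valuation_eq {x y : ℤ_[p]} (hx : x ≠ 0) (hy : y ≠ 0)
    (h : x.valuation = y.valuation) : Associated x y :=
  (associated_pow_valuation hx).trans (h ▸ (associated_pow_valuation hy).symm)

end PadicInt

theorem Zhat.exists_associated_natCast_of_dvd_natCast {x : Zhat} {n : ℕ} (hn : n ≠ 0)
    (hx : x ∣ (n : Zhat)) : ∃ d : ℕ, d ∣ n ∧ Associated (d : Zhat) x := by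
  have hxp (p : Nat.Primes) : x p ∣ (n : ℤ_[(p : ℕ)]) := by
    simpa using map_dvd (Pi.evalRingHom _ p) hx
  have hn' (p : Nat.Primes) : (n : ℤ_[(p : ℕ)]) ≠ 0 := Nat.cast_ne_zero.mpr hn
  let e (q : ℕ) : ℕ :=
    if hq : q.Prime then have : Fact q.Prime := ⟨hq⟩; (x ⟨q, hq⟩).valuation else 0
  have he (q : ℕ) : e q ≤ n.factorization q := by
    unfold e
    split_ifs with hq
    · have : Fact q.Prime := ⟨hq⟩
      rw [Nat.factorization_def n hq, ← PadicInt.valuation_natCast]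
      exact PadicInt.valuation_le_of_dvd (hn' ⟨q, hq⟩) (hxp ⟨q, hq⟩)
    · exact Nat.zero_le _
  let f : ℕ →₀ ℕ := Finsupp.onFinset n.primeFactors e fun q hq ↦ by
    rw [← Nat.support_factorization, Finsupp.mem_support_iff]
    exact (Nat.pos_of_ne_zero hq).trans_le (he q) |>.ne'
  have hf : f ≤ n.factorization := fun q ↦ he q
  have hfd := Nat.factorization_prod_pow_eq_self_of_le_factorization hf
  have hd : f.prod (· ^ ·) ≠ 0 := Finsupp.prod_ne_zero_iff.mpr fun q hq ↦
    pow_ne_zero _ (Nat.prime_of_mem_primeFactors (Finsupp.support_onFinset_subset hq)).ne_zero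
  refine ⟨f.prod (· ^ ·), (Nat.factorization_le_iff_dvd hd hn).mp (by rwa [hfd]),
    Pi.associated_of_forall fun p ↦ ?_⟩
  have hx0 : x p ≠ 0 := fun h ↦ hn' p (zero_dvd_iff.mp (h ▸ hxp p))
  refine PadicInt.associated_of_valuation_eq (Nat.cast_ne_zero.mpr hd) hx0 ?_
  rw [Pi.natCast_apply, PadicInt.valuation_natCast, ← Nat.factorization_def _ p.2, hfd,
    Finsupp.onFinset_apply]
  exact dif_pos p.2

/-- Every unit `α` of `ℚ ⊗[ℤ] ∏_p ℤ_p` factors as `(q ⊗ 1) · (1 ⊗ u)` with `q ∈ ℚˣ` and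
`u ∈ (∏_p ℤ_p)ˣ`; this expresses the triviality of the ideal class group of `ℤ`. -/
theorem units_of_tensor_factor (α : (ℚ ⊗[ℤ] Zhat)ˣ) :
    ∃ (q : ℚˣ) (u : Zhatˣ),
      (α : ℚ ⊗[ℤ] Zhat) = ((q : ℚ) ⊗ₜ[ℤ] (1 : Zhat)) * ((1 : ℚ) ⊗ₜ[ℤ] (u : Zhat)) := by
  obtain ⟨s, hs, x, hx⟩ := TensorProduct.exists_zsmul_eq_one_tmul (α : ℚ ⊗[ℤ] Zhat)
  have hs' : (s : ℚ) ≠ 0 := Int.cast_ne_zero.mpr hs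
  have hxu : IsUnit ((1 : ℚ) ⊗ₜ[ℤ] x) := by
    rw [← hx, zsmul_eq_mul, ← map_intCast (algebraMap ℚ (ℚ ⊗[ℤ] Zhat))]
    exact ((isUnit_iff_ne_zero.mpr hs').map _).mul α.isUnit
  obtain ⟨n, hn, hxn⟩ := TensorProduct.exists_dvd_natCast_of_isUnit_one_tmul hxu
  obtain ⟨d, hdn, u, rfl⟩ := Zhat.exists_associated_natCast_of_dvd_natCast hn hxn
  have hd : (d : ℚ) ≠ 0 := Nat.cast_ne_zero.mpr (ne_zero_of_dvd_ne_zero hn hdn)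
  refine ⟨Units.mk0 (d / s) (div_ne_zero hd hs'), u, ?_⟩
  rw [Algebra.TensorProduct.tmul_mul_tmul, one_mul, mul_one, Units.val_mk0]
  calc (α : ℚ ⊗[ℤ] Zhat) = (s : ℚ)⁻¹ • (s • (α : ℚ ⊗[ℤ] Zhat)) := by
        rw [← Int.cast_smul_eq_zsmul ℚ, inv_smul_smul₀ hs']
    _ = (d / s : ℚ) ⊗ₜ[ℤ] (u : Zhat) := by
        rw [hx, ← nsmul_eq_mul, ← TensorProduct.smul_tmul, TensorProduct.smul_tmul',
          nsmul_eq_mul, mul_one, smul_eq_mul, inv_mul_eq_div]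
end
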